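/- Let H, H₁ be complex Hilbert spaces, p > 0, C₀ ≥ 0, and let B : H → H₁ be a compact operator. Suppose that for each M ∈ ℕ one can write B = B_M + B′_M with compact operators B_M, B′_M such that s_j(B_M) j^{1/p} → C_M as j → ∞, s_j(B′_M) j^{1/p} ≤ c_M for all j ∈ ℕ, and C_M → C₀, c_M → 0 as M → ∞. Then s_j(B) j^{1/p} → C₀ as j → ∞. -/

import Mathlib

open Filter
open scoped Topology

noncomputable section

/-- The `j`-th singular value (approximation number) of a bounded operator between
Hilbert spaces: `s_j(B) = inf{‖B − F‖ : F of rank < j}`. -/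
def sNum {H H₁ : Type*} [NormedAddCommGroup H] [InnerProductSpace ℂ H]
    [NormedAddCommGroup H₁] [InnerProductSpace ℂ H₁] (B : H →L[ℂ] H₁) (j : ℕ) : ℝ :=
  sInf {r : ℝ | ∃ F : H →L[ℂ] H₁,
    Module.rank ℂ (LinearMap.range (F : H →ₗ[ℂ] H₁)) < (j : Cardinal) ∧ ‖B - F‖ = r}


/-! Approximation numbers satisfy Ky Fan's inequality `s_{j+k-1}(A + B) ≤ s_j(A) + s_k(B)`.
Writing `n = j + k - 1` with `k ≈ δ n`, it turns `B = B_M + B'_M` into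
`s_n(B) n^{1/p} ≤ (1 - δ)^{-1/p} s_j(B_M) j^{1/p} + δ^{-1/p} c_M`, and `B_M = B - B'_M` into the
matching lower bound `(1 + δ)^{-1/p} s_n(B_M) n^{1/p} - δ^{-1/p} c_M ≤ s_k(B) k^{1/p}` with
`n = k + ⌈δ k⌉ - 1`. Hence every limit point of `s_n(B) n^{1/p}` lies between
`(1 + δ)^{-1/p} C_M - δ^{-1/p} c_M` and `(1 - δ)^{-1/p} C_M + δ^{-1/p} c_M`; letting first
`M → ∞` and then `δ → 0` pins it to `C₀`. -/

section SingularNumbers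

variable {H H₁ : Type*} [NormedAddCommGroup H] [InnerProductSpace ℂ H]
    [NormedAddCommGroup H₁] [InnerProductSpace ℂ H₁]

lemma sNum_nonneg (B : H →L[ℂ] H₁) (j : ℕ) : 0 ≤ sNum B j :=
  Real.sInf_nonneg (by rintro r ⟨F, -, rfl⟩; exact norm_nonneg _)

lemma sNum_le (B F : H →L[ℂ] H₁) {j : ℕ} (hF : LinearMap.rank (F : H →ₗ[ℂ] H₁) < j) :
    sNum B j ≤ ‖B - F‖ :=
  csInf_le ⟨0, by rintro r ⟨G, -, rfl⟩; exact norm_nonneg _⟩ ⟨F, hF, rfl⟩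

lemma le_sNum (B : H →L[ℂ] H₁) {j : ℕ} (hj : 1 ≤ j) {r : ℝ}
    (h : ∀ F : H →L[ℂ] H₁, LinearMap.rank (F : H →ₗ[ℂ] H₁) < j → r ≤ ‖B - F‖) :
    r ≤ sNum B j := by
  refine le_csInf ⟨‖B - 0‖, 0, ?_, rfl⟩ (by rintro _ ⟨F, hF, rfl⟩; exact h F hF)
  rw [ContinuousLinearMap.toLinearMap_zero, LinearMap.range_zero, rank_bot]
  exact_mod_cast hj

lemma sNum_neg (B : H →L[ℂ] H₁) (j : ℕ) : sNum (-B) j = sNum B j := by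
  unfold sNum
  congr 1
  ext r
  constructor <;> rintro ⟨F, hF, rfl⟩ <;>
    refine ⟨-F, by rwa [ContinuousLinearMap.toLinearMap_neg, LinearMap.range_neg], ?_⟩ <;>
    rw [← norm_neg] <;> congr 1 <;> abel

lemma Cardinal.add_lt_natCast_add_sub_one {a b : Cardinal} {j k : ℕ} (ha : a < j) (hb : b < k) :
    a + b < ((j + k - 1 : ℕ) : Cardinal) := by
  obtain ⟨a, rfl⟩ := Cardinal.lt_aleph0.mp (ha.trans Cardinal.natCast_lt_aleph0)
  obtain ⟨b, rfl⟩ := Cardinal.lt_aleph0.mp (hb.trans Cardinal.natCast_lt_aleph0)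
  norm_cast at ha hb ⊢
  omega

lemma sNum_add_le (A B : H →L[ℂ] H₁) {j k : ℕ} (hj : 1 ≤ j) (hk : 1 ≤ k) :
    sNum (A + B) (j + k - 1) ≤ sNum A j + sNum B k := by
  have key : ∀ F G : H →L[ℂ] H₁, LinearMap.rank (F : H →ₗ[ℂ] H₁) < j →
      LinearMap.rank (G : H →ₗ[ℂ] H₁) < k → sNum (A + B) (j + k - 1) ≤ ‖A - F‖ + ‖B - G‖ := by
    intro F G hF hG
    have hFG : LinearMap.rank ((F + G : H →L[ℂ] H₁) : H →ₗ[ℂ] H₁) < (j + k - 1 : ℕ) :=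
      (LinearMap.rank_add_le _ _).trans_lt (Cardinal.add_lt_natCast_add_sub_one hF hG)
    calc sNum (A + B) (j + k - 1) ≤ ‖A + B - (F + G)‖ := sNum_le _ _ hFG
      _ ≤ ‖A - F‖ + ‖B - G‖ := by rw [add_sub_add_comm]; exact norm_add_le _ _
  suffices sNum (A + B) (j + k - 1) - sNum B k ≤ sNum A j by linarith
  refine le_sNum A hj fun F hF => ?_
  suffices sNum (A + B) (j + k - 1) - ‖A - F‖ ≤ sNum B k by linarith
  exact le_sNum B hk fun G hG => by linarith [key F G hF hG]

end SingularNumbers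

section Sequences

variable {q c C δ r : ℝ} {x y z : ℕ → ℝ}

lemma mul_rpow_le_of_le_mul {u s t K : ℝ} (hu : 0 ≤ u) (hq : 0 ≤ q) (hs : 0 ≤ s) (hK : 0 ≤ K)
    (ht : 0 ≤ t) (h : s ≤ K * t) : u * s ^ q ≤ K ^ q * (u * t ^ q) :=
  calc u * s ^ q ≤ u * (K * t) ^ q := by gcongr
    _ = K ^ q * (u * t ^ q) := by rw [Real.mul_rpow hK ht]; ring

lemma exists_tendsto_mul_rpow_le_of_le_add (hq : 0 ≤ q) (hy : ∀ j, 0 ≤ y j) (hz : ∀ k, 0 ≤ z k)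
    (hsplit : ∀ j k, 1 ≤ j → 1 ≤ k → x (j + k - 1) ≤ y j + z k)
    (hbound : ∀ k, 1 ≤ k → z k * (k : ℝ) ^ q ≤ c) (hδ : δ ∈ Set.Ioo 0 1) :
    ∃ j : ℕ → ℕ, Tendsto j atTop atTop ∧ ∀ᶠ n in atTop,
      x n * (n : ℝ) ^ q ≤ (1 - δ)⁻¹ ^ q * (y (j n) * (j n : ℝ) ^ q) + δ⁻¹ ^ q * c := by
  obtain ⟨hδ0, hδ1⟩ := hδ
  have hk_le (n : ℕ) : ⌈δ * n⌉₊ ≤ n := Nat.ceil_le.2 (by nlinarith [n.cast_nonneg (α := ℝ)])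
  -- split `n = j + k - 1` with `k = ⌈δ n⌉`, so that `j ≥ (1 - δ) n` and `k ≥ δ n`
  have hj_ge (n : ℕ) : (1 - δ) * n ≤ ((n + 1 - ⌈δ * n⌉₊ : ℕ) : ℝ) := by
    rw [Nat.cast_sub (by linarith [hk_le n]), Nat.cast_add_one]
    linarith [Nat.ceil_lt_add_one (by positivity : 0 ≤ δ * n)]
  refine ⟨fun n => n + 1 - ⌈δ * n⌉₊, ?_, ?_⟩
  · exact tendsto_natCast_atTop_iff.1 <| tendsto_atTop_mono hj_ge <|
      tendsto_natCast_atTop_atTop.const_mul_atTop (by linarith)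
  filter_upwards [eventually_ge_atTop 1] with n hn
  set k := ⌈δ * n⌉₊
  set j := n + 1 - k
  have hk : 1 ≤ k := Nat.ceil_pos.2 (by positivity)
  have hj : 1 ≤ j := by have := hk_le n; omega
  have hjk : j + k - 1 = n := by have := hk_le n; omega
  have hnj : (n : ℝ) ≤ (1 - δ)⁻¹ * j := by
    rw [inv_mul_eq_div, le_div_iff₀ (by linarith)]; linarith [hj_ge n]
  have hnk : (n : ℝ) ≤ δ⁻¹ * k := by
    rw [inv_mul_eq_div, le_div_iff₀ hδ0]; linarith [Nat.le_ceil (δ * n)]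
  calc x n * (n : ℝ) ^ q ≤ y j * (n : ℝ) ^ q + z k * (n : ℝ) ^ q := by
        rw [← add_mul]; gcongr; exact hjk ▸ hsplit j k hj hk
    _ ≤ (1 - δ)⁻¹ ^ q * (y j * (j : ℝ) ^ q) + δ⁻¹ ^ q * (z k * (k : ℝ) ^ q) := add_le_add
        (mul_rpow_le_of_le_mul (hy j) hq (by positivity) (by simp; linarith) (by positivity) hnj)
        (mul_rpow_le_of_le_mul (hz k) hq (by positivity) (by positivity) (by positivity) hnk)
    _ ≤ _ := by gcongr; exact hbound k hk

lemma exists_tendsto_mul_rpow_le_mul_of_le_add (hq : 0 ≤ q) (hx : ∀ n, 0 ≤ x n) (hz : ∀ k, 0 ≤ z k)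
    (hsplit : ∀ j k, 1 ≤ j → 1 ≤ k → x (j + k - 1) ≤ y j + z k)
    (hbound : ∀ k, 1 ≤ k → z k * (k : ℝ) ^ q ≤ c) (hδ : 0 < δ) :
    ∃ n : ℕ → ℕ, Tendsto n atTop atTop ∧ ∀ᶠ k in atTop,
      x (n k) * (n k : ℝ) ^ q ≤ (1 + δ) ^ q * (y k * (k : ℝ) ^ q + δ⁻¹ ^ q * c) := by
  -- split `n = k + m - 1` with `m = ⌈δ k⌉`, so that `n ≤ (1 + δ) k` and `m ≥ δ k`
  refine ⟨fun k => k + ⌈δ * k⌉₊ - 1,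
    tendsto_atTop_mono (fun k => by omega) (tendsto_sub_atTop_nat 1), ?_⟩
  filter_upwards [eventually_ge_atTop 1] with k hk
  set m := ⌈δ * k⌉₊
  have hm : 1 ≤ m := Nat.ceil_pos.2 (by positivity)
  have hn : ((k + m - 1 : ℕ) : ℝ) ≤ (1 + δ) * k := by
    push_cast [Nat.cast_sub (by omega : 1 ≤ k + m)]
    linarith [Nat.ceil_lt_add_one (by positivity : 0 ≤ δ * k)]
  have hkm : (k : ℝ) ≤ δ⁻¹ * m := by
    rw [inv_mul_eq_div, le_div_iff₀ hδ]; linarith [Nat.le_ceil (δ * k)]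
  calc x (k + m - 1) * ((k + m - 1 : ℕ) : ℝ) ^ q
      ≤ (1 + δ) ^ q * (x (k + m - 1) * (k : ℝ) ^ q) :=
        mul_rpow_le_of_le_mul (hx _) hq (by positivity) (by linarith) (by positivity) hn
    _ ≤ (1 + δ) ^ q * (y k * (k : ℝ) ^ q + z m * (k : ℝ) ^ q) := by
        rw [← add_mul]; gcongr; exact hsplit k m hk hm
    _ ≤ (1 + δ) ^ q * (y k * (k : ℝ) ^ q + δ⁻¹ ^ q * (z m * (m : ℝ) ^ q)) := by
        gcongr (1 + δ) ^ q * (_ + ?_)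
        exact mul_rpow_le_of_le_mul (hz m) hq (by positivity) (by positivity) (by positivity) hkm
    _ ≤ _ := by gcongr; exact hbound m hm

lemma eventually_mul_rpow_lt_of_le_add (hq : 0 ≤ q) (hy : ∀ j, 0 ≤ y j) (hz : ∀ k, 0 ≤ z k)
    (hsplit : ∀ j k, 1 ≤ j → 1 ≤ k → x (j + k - 1) ≤ y j + z k)
    (hbound : ∀ k, 1 ≤ k → z k * (k : ℝ) ^ q ≤ c)
    (hlim : Tendsto (fun j : ℕ => y j * (j : ℝ) ^ q) atTop (𝓝 C)) (hδ : δ ∈ Set.Ioo 0 1)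
    (hr : (1 - δ)⁻¹ ^ q * C + δ⁻¹ ^ q * c < r) :
    ∀ᶠ n : ℕ in atTop, x n * (n : ℝ) ^ q < r := by
  obtain ⟨j, hj, hle⟩ := exists_tendsto_mul_rpow_le_of_le_add hq hy hz hsplit hbound hδ
  filter_upwards [hle, (((hlim.comp hj).const_mul _).add_const _).eventually_lt_const hr]
    with n hn hnr using hn.trans_lt hnr

lemma eventually_lt_mul_rpow_of_le_add (hq : 0 ≤ q) (hx : ∀ n, 0 ≤ x n) (hz : ∀ k, 0 ≤ z k)
    (hsplit : ∀ j k, 1 ≤ j → 1 ≤ k → x (j + k - 1) ≤ y j + z k)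
    (hbound : ∀ k, 1 ≤ k → z k * (k : ℝ) ^ q ≤ c)
    (hlim : Tendsto (fun n : ℕ => x n * (n : ℝ) ^ q) atTop (𝓝 C)) (hδ : 0 < δ)
    (hr : (1 + δ) ^ q * (r + δ⁻¹ ^ q * c) < C) :
    ∀ᶠ k : ℕ in atTop, r < y k * (k : ℝ) ^ q := by
  obtain ⟨n, hn, hle⟩ := exists_tendsto_mul_rpow_le_mul_of_le_add hq hx hz hsplit hbound hδ
  filter_upwards [hle, (hlim.comp hn).eventually_const_lt hr] with k hk hrk
  have := (mul_lt_mul_iff_right₀ (by positivity : (0 : ℝ) < (1 + δ) ^ q)).1 (hrk.trans_le hk)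
  linarith

lemma exists_mem_Ioo_lt_of_continuousAt {f : ℝ → ℝ} (hf : ContinuousAt f 0) (hr : f 0 < r) :
    ∃ δ ∈ Set.Ioo (0 : ℝ) 1, f δ < r :=
  (((hf.eventually_lt_const hr).filter_mono nhdsWithin_le_nhds).and
    (Ioo_mem_nhdsGT one_pos)).exists.imp fun _ h => ⟨h.2, h.1⟩

theorem tendsto_mul_rpow_of_forall_le_add {a : ℕ → ℝ} {b b' : ℕ → ℕ → ℝ} {C c : ℕ → ℝ}
    {C₀ : ℝ} (hq : 0 ≤ q) (hb : ∀ M j, 0 ≤ b M j) (hb' : ∀ M k, 0 ≤ b' M k)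
    (hab : ∀ M j k, 1 ≤ j → 1 ≤ k → a (j + k - 1) ≤ b M j + b' M k)
    (hba : ∀ M j k, 1 ≤ j → 1 ≤ k → b M (j + k - 1) ≤ a j + b' M k)
    (hasym : ∀ M, Tendsto (fun j : ℕ => b M j * (j : ℝ) ^ q) atTop (𝓝 (C M)))
    (hbound : ∀ M k, 1 ≤ k → b' M k * (k : ℝ) ^ q ≤ c M)
    (hC : Tendsto C atTop (𝓝 C₀)) (hc : Tendsto c atTop (𝓝 0)) :
    Tendsto (fun n : ℕ => a n * (n : ℝ) ^ q) atTop (𝓝 C₀) := by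
  refine tendsto_order.2 ⟨fun r hr => ?_, fun r hr => ?_⟩
  · obtain ⟨δ, hδ, hδr⟩ : ∃ δ ∈ Set.Ioo (0 : ℝ) 1, (1 + δ) ^ q * r < C₀ :=
      exists_mem_Ioo_lt_of_continuousAt (by fun_prop (disch := positivity)) (by simpa using hr)
    obtain ⟨M, hM⟩ : ∃ M, (1 + δ) ^ q * (r + δ⁻¹ ^ q * c M) < C M :=
      (((hc.const_mul _).const_add r).const_mul _ |>.eventually_lt hC (by simpa using hδr)).exists
    exact eventually_lt_mul_rpow_of_le_add hq (hb M) (hb' M) (hba M) (hbound M) (hasym M) hδ.1 hM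
  · obtain ⟨δ, hδ, hδr⟩ : ∃ δ ∈ Set.Ioo (0 : ℝ) 1, (1 - δ)⁻¹ ^ q * C₀ < r :=
      exists_mem_Ioo_lt_of_continuousAt (by fun_prop (disch := positivity)) (by simpa using hr)
    obtain ⟨M, hM⟩ : ∃ M, (1 - δ)⁻¹ ^ q * C M + δ⁻¹ ^ q * c M < r :=
      ((hC.const_mul _).add (hc.const_mul _) |>.eventually_lt_const (by simpa using hδr)).exists
    exact eventually_mul_rpow_lt_of_le_add hq (hb M) (hb' M) (hab M) (hbound M) (hasym M) hδ hM

end Sequences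

theorem statement2_general {H H₁ : Type*}
    [NormedAddCommGroup H] [InnerProductSpace ℂ H]
    [NormedAddCommGroup H₁] [InnerProductSpace ℂ H₁]
    (p C₀ : ℝ) (hp : 0 < p)
    (B : H →L[ℂ] H₁)
    (BM B'M : ℕ → (H →L[ℂ] H₁)) (CM cM : ℕ → ℝ)
    (hsplit : ∀ M, B = BM M + B'M M)
    (hasym : ∀ M, Tendsto (fun j : ℕ => sNum (BM M) j * (j : ℝ) ^ (1 / p)) atTop (𝓝 (CM M)))
    (hbound : ∀ M, ∀ j : ℕ, 1 ≤ j → sNum (B'M M) j * (j : ℝ) ^ (1 / p) ≤ cM M)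
    (hCM : Tendsto CM atTop (𝓝 C₀)) (hcM : Tendsto cM atTop (𝓝 0)) :
    Tendsto (fun j : ℕ => sNum B j * (j : ℝ) ^ (1 / p)) atTop (𝓝 C₀) := by
  refine tendsto_mul_rpow_of_forall_le_add (by positivity) (fun M => sNum_nonneg (BM M))
    (fun M => sNum_nonneg (B'M M)) (fun M j k hj hk => ?_) (fun M j k hj hk => ?_)
    hasym hbound hCM hcM
  · rw [hsplit M]
    exact sNum_add_le _ _ hj hk
  · rw [eq_sub_of_add_eq (hsplit M).symm, sub_eq_add_neg]
    simpa only [sNum_neg] using sNum_add_le B (-B'M M) hj hk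

/-- refined perturbation lemma, [G84] Lemma 4.2 2°: if
`B = B_M + B'_M` for each `M`, with `s_j(B_M) j^{1/p} → C_M`,
`s_j(B'_M) j^{1/p} ≤ c_M` for all `j ≥ 1`, and `C_M → C₀`, `c_M → 0`,
then `s_j(B) j^{1/p} → C₀`. -/
theorem statement2 {H H₁ : Type*}
    [NormedAddCommGroup H] [InnerProductSpace ℂ H] [CompleteSpace H]
    [NormedAddCommGroup H₁] [InnerProductSpace ℂ H₁] [CompleteSpace H₁]
    (p C₀ : ℝ) (hp : 0 < p) (hC₀ : 0 ≤ C₀)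
    (B : H →L[ℂ] H₁) (hB : IsCompactOperator (B : H → H₁))
    (BM B'M : ℕ → (H →L[ℂ] H₁)) (CM cM : ℕ → ℝ)
    (hBM : ∀ M, IsCompactOperator ((BM M : H →L[ℂ] H₁) : H → H₁))
    (hB'M : ∀ M, IsCompactOperator ((B'M M : H →L[ℂ] H₁) : H → H₁))
    (hsplit : ∀ M, B = BM M + B'M M)
    (hasym : ∀ M, Tendsto (fun j : ℕ => sNum (BM M) j * (j : ℝ) ^ (1 / p)) atTop (𝓝 (CM M)))
    (hbound : ∀ M, ∀ j : ℕ, 1 ≤ j → sNum (B'M M) j * (j : ℝ) ^ (1 / p) ≤ cM M)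
    (hCM : Tendsto CM atTop (𝓝 C₀)) (hcM : Tendsto cM atTop (𝓝 0)) :
    Tendsto (fun j : ℕ => sNum B j * (j : ℝ) ^ (1 / p)) atTop (𝓝 C₀) :=
  statement2_general p C₀ hp B BM B'M CM cM hsplit hasym hbound hCM hcM
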